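/- arXiv:1612.06726 — 2 statements merged into one kernel-verified Lean document; each statement's English description precedes it below -/
import Mathlib

section
/- Let I ⊆ S = C[x_0,...,x_n] be a homogeneous ideal with Hilbert polynomial p_I. Define the defect δ_k(I) = p_I(k) − h_I(k), where h_I(k) = dim (S/I)_k. Then δ_k(I) = (−1)^n Σ_{j ≥ k+n+1} B_j · binom(j−k−1, n), where B_j are the alternating sums of graded Betti numbers of S/I. In particular, if δ_k(I) ≠ 0 then B_j ≠ 0 for some j ≥ k+n+1. -/
open MvPolynomial Module Finset DirectSum

/-- The polynomial ring `ℂ[x_0, …, x_n]`. -/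
abbrev S (n : ℕ) := MvPolynomial (Fin (n + 1)) ℂ

/-- The ideal `I` is homogeneous: it contains all homogeneous components of its elements. -/
def IsHomogeneousIdeal {n : ℕ} (I : Ideal (S n)) : Prop :=
  ∀ f ∈ I, ∀ k : ℕ, homogeneousComponent k f ∈ I

/-- The degree-`k` graded piece of `S/I`, realized as the image of the homogeneous
polynomials of degree `k` in the quotient ring. -/
noncomputable def quotPiece {n : ℕ} (I : Ideal (S n)) (k : ℕ) :
    Submodule ℂ (S n ⧸ I) :=
  (homogeneousSubmodule (Fin (n + 1)) ℂ k).map (Ideal.Quotient.mkₐ ℂ I).toLinearMap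

/-- The Hilbert function `h_{S/I}(k) = dim_ℂ (S/I)_k`. -/
noncomputable def hilb {n : ℕ} (I : Ideal (S n)) (k : ℕ) : ℕ :=
  finrank ℂ (quotPiece I k)

/-- The degree-`k` graded piece of the graded free module `F_i = ⊕_j S(-j)^{β_{i,j}}`,
namely `⊕_{j ≤ k} (S_{k-j})^{β_{i,j}}` (terms with `j > k` vanish). -/
noncomputable abbrev freePiece (n : ℕ) (β : ℕ → ℕ → ℕ) (i k : ℕ) :=
  DirectSum (Fin (k + 1)) fun j => (Fin (β i (j : ℕ)) → homogeneousSubmodule (Fin (n + 1)) ℂ (k - (j : ℕ)))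

/-- A degreewise incarnation of a graded free resolution
`0 → F_s → ⋯ → F_0 → S/I → 0` with `F_i = ⊕_j S(-j)^{β_{i,j}}` finitely generated:
for every degree `k` there are linear maps forming an exact sequence of the degree-`k`
pieces. (We take `β i j = 0` for `i > s`, so the chain is eventually zero.) -/
def IsDegreewiseFreeResolution (n s : ℕ) (β : ℕ → ℕ → ℕ) (I : Ideal (S n)) : Prop :=
  (∀ i j, s < i → β i j = 0) ∧
  ∀ k : ℕ, ∃ (d : ∀ i : ℕ, freePiece n β (i + 1) k →ₗ[ℂ] freePiece n β i k)
    (ε : freePiece n β 0 k →ₗ[ℂ] quotPiece I k),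
      Function.Surjective ε ∧ Function.Exact (d 0) ε ∧
      ∀ i : ℕ, Function.Exact (d (i + 1)) (d i)

/-!
Since `dim_ℂ S(-j)_k = binom(k - j + n, n)` for `j ≤ k`, exactness of the degree-`k` strand of the
resolution gives `h_I(k) = Σ_{j ≤ k} B_j binom(k - j + n, n)`. For `k ≥ N` this is the value at `k`
of `P = Σ_{j < N} B_j binom(X - j + n, n)`, so `P = p_I`. At an arbitrary `k` the summands with
`j ≤ k` of `P(k)` and `h_I(k)` coincide, and for `j > k` upper negation gives
`binom(k - j + n, n) = (-1)^n binom(j - k - 1, n)`, which vanishes unless `j ≥ k + n + 1`.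
-/

section Homogeneous

variable {σ K : Type*} [Field K]

theorem finrank_homogeneousSubmodule [Fintype σ] (d : ℕ) :
    finrank K (homogeneousSubmodule σ K d) = (Fintype.card σ).multichoose d := by
  classical
  have : {m : σ →₀ ℕ | m.degree = d} = ↑((univ : Finset σ).finsuppAntidiag d) := by
    ext m; simp [Finsupp.degree_eq_sum]
  rw [homogeneousSubmodule_eq_finsupp_supported, this, ← restrictSupport,
    finrank_eq_card_basis (basisRestrictSupport K _)]
  exact (Fintype.card_coe _).trans (by rw [card_finsuppAntidiag_nat_eq_multichoose, card_univ])

instance [Finite σ] (d : ℕ) : FiniteDimensional K (homogeneousSubmodule σ K d) :=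
  Module.Finite.iff_fg.mpr (homogeneousSubmodule_fg σ K d)

end Homogeneous

section EulerCharacteristic

variable {K U V W : Type*} [Field K] [AddCommGroup U] [Module K U] [AddCommGroup V] [Module K V]
  [AddCommGroup W] [Module K W]

theorem Function.Exact.finrank_eq_add [FiniteDimensional K V] {f : U →ₗ[K] V} {g : V →ₗ[K] W}
    (h : Function.Exact f g) :
    finrank K V = finrank K (LinearMap.range g) + finrank K (LinearMap.range f) := by
  rw [← LinearMap.finrank_range_add_finrank_ker g, h.linearMap_ker_eq]

theorem finrank_eq_alternating_sum_of_exact (F : ℕ → Type*) [∀ i, AddCommGroup (F i)]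
    [∀ i, Module K (F i)] [∀ i, FiniteDimensional K (F i)] (s : ℕ) [Subsingleton (F (s + 1))]
    (d : ∀ i, F (i + 1) →ₗ[K] F i) (ε : F 0 →ₗ[K] W) (hε : Function.Surjective ε)
    (h₀ : Function.Exact (d 0) ε) (hd : ∀ i, Function.Exact (d (i + 1)) (d i)) :
    (finrank K W : ℤ) = ∑ i ∈ range (s + 1), (-1) ^ i * (finrank K (F i) : ℤ) := by
  let c : ℕ → ℤ := fun i => Nat.casesOn i (finrank K W) fun i => finrank K (LinearMap.range (d i))
  have hF : ∀ i, (finrank K (F i) : ℤ) = c i + c (i + 1) := by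
    rintro (_ | i)
    · rw [h₀.finrank_eq_add, LinearMap.range_eq_top_of_surjective ε hε, finrank_top]
      push_cast; rfl
    · simp [c, (hd i).finrank_eq_add]
  have hc : c (s + 1) = 0 := by
    simpa [c] using (LinearMap.finrank_range_le (d s)).trans_eq finrank_zero_of_subsingleton
  calc (finrank K W : ℤ) = (-1) ^ 0 * c 0 - (-1) ^ (s + 1) * c (s + 1) := by simp [c, hc]
    _ = ∑ i ∈ range (s + 1), ((-1) ^ i * c i - (-1) ^ (i + 1) * c (i + 1)) :=
      (sum_range_sub' (fun i => (-1) ^ i * c i) (s + 1)).symm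
    _ = _ := sum_congr rfl fun i _ => by rw [hF]; ring

end EulerCharacteristic

section FreeResolution

variable {n : ℕ}

theorem finrank_homogeneousSubmodule_fin (d : ℕ) :
    finrank ℂ (homogeneousSubmodule (Fin (n + 1)) ℂ d) = (d + n).choose n := by
  rw [finrank_homogeneousSubmodule, Fintype.card_fin, Nat.multichoose_eq,
    show n + 1 + d - 1 = d + n by omega, Nat.choose_symm_add]

theorem finrank_freePiece (β : ℕ → ℕ → ℕ) (i k : ℕ) :
    finrank ℂ (freePiece n β i k) = ∑ j ∈ range (k + 1), β i j * (k - j + n).choose n := by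
  rw [(linearEquivFunOnFintype ℂ _ _).finrank_eq, finrank_pi_fintype,
    ← Fin.sum_univ_eq_sum_range (fun j => β i j * (k - j + n).choose n)]
  simp [finrank_pi_fintype, finrank_homogeneousSubmodule_fin]

theorem subsingleton_freePiece {β : ℕ → ℕ → ℕ} {i : ℕ} (h : ∀ j, β i j = 0) (k : ℕ) :
    Subsingleton (freePiece n β i k) := by
  have (j : Fin (k + 1)) : IsEmpty (Fin (β i j)) := by rw [h]; infer_instance
  infer_instance

theorem hilb_eq_sum_mul_choose {s : ℕ} {β : ℕ → ℕ → ℕ} {I : Ideal (S n)}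
    (hres : IsDegreewiseFreeResolution n s β I) {B : ℕ → ℤ}
    (hB : ∀ j, B j = ∑ i ∈ range (s + 1), (-1 : ℤ) ^ i * β i j) (k : ℕ) :
    (hilb I k : ℚ) = ∑ j ∈ range (k + 1), (B j : ℚ) * ((k - j + n).choose n : ℚ) := by
  obtain ⟨hβ, hexact⟩ := hres
  obtain ⟨d, ε, hε, h₀, hd⟩ := hexact k
  have := subsingleton_freePiece (n := n) (fun j => hβ (s + 1) j (lt_add_one s)) k
  have hχ := finrank_eq_alternating_sum_of_exact (fun i => freePiece n β i k) s d ε hε h₀ hd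
  simp only [finrank_freePiece] at hχ
  have : (hilb I k : ℤ) = ∑ j ∈ range (k + 1), B j * ((k - j + n).choose n : ℤ) := by
    simp only [hilb, hχ, hB, Nat.cast_sum, Nat.cast_mul, mul_sum, sum_mul, mul_assoc]
    exact sum_comm
  exact_mod_cast this

end FreeResolution

noncomputable def choosePoly (n : ℕ) : Polynomial ℚ :=
  (n.factorial : ℚ)⁻¹ • descPochhammer ℚ n

theorem eval_choosePoly (n : ℕ) (a : ℚ) : (choosePoly n).eval a = Ring.choose a n := by
  rw [choosePoly, Ring.choose_eq_smul, Polynomial.eval_smul,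
    ← descPochhammer_map (Int.castRingHom ℚ), Polynomial.eval_map, ← algebraMap_int_eq,
    ← Polynomial.aeval_def, Polynomial.aeval_eq_smeval]

theorem Ring.choose_natCast_sub_add {j k : ℕ} (h : j ≤ k) (n : ℕ) :
    Ring.choose ((k : ℚ) - j + n) n = ((k - j + n).choose n : ℚ) := by
  rw [← Ring.choose_natCast]
  push_cast [h]
  rfl

theorem Ring.choose_natCast_sub_add_of_lt {j k : ℕ} (h : k < j) (n : ℕ) :
    Ring.choose ((k : ℚ) - j + n) n = (-1) ^ n * ((j - k - 1).choose n : ℚ) := by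
  set m := j - k - 1
  have hm : (k : ℚ) - j + n = -((m : ℚ) - n + 1) := by
    push_cast [m, Nat.sub_sub, Nat.add_one_le_iff.mpr h]
    ring
  rw [hm, Ring.choose_neg, show (m : ℚ) - n + 1 + n - 1 = m by ring, Units.smul_def,
    Ring.choose_natCast]
  simp [Int.coe_negOnePow]

theorem Polynomial.eq_of_eval_natCast_eq {R : Type*} [CommRing R] [IsDomain R] [CharZero R]
    {p q : Polynomial R} (k₀ : ℕ) (h : ∀ k : ℕ, k₀ ≤ k → p.eval (k : R) = q.eval (k : R)) :
    p = q :=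
  eq_of_infinite_eval_eq p q <| Set.infinite_of_injective_forall_mem
    (f := fun m : ℕ => ((k₀ + m : ℕ) : R)) (fun _ _ hab => by simpa using hab)
    fun m => h _ (Nat.le_add_right k₀ m)

section BettiPolynomial

variable {n N : ℕ} {B : ℕ → ℤ}

noncomputable def bettiHilbertPoly (n N : ℕ) (B : ℕ → ℤ) : Polynomial ℚ :=
  ∑ j ∈ range N, (B j : ℚ) •
    (choosePoly n).comp (Polynomial.X - Polynomial.C (j : ℚ) + Polynomial.C (n : ℚ))

theorem eval_bettiHilbertPoly (x : ℚ) :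
    (bettiHilbertPoly n N B).eval x = ∑ j ∈ range N, (B j : ℚ) * Ring.choose (x - j + n) n := by
  simp [bettiHilbertPoly, Polynomial.eval_finsetSum, eval_choosePoly]

theorem eval_bettiHilbertPoly_natCast (hB : ∀ j, N ≤ j → B j = 0) (k : ℕ) :
    (bettiHilbertPoly n N B).eval (k : ℚ) =
      ∑ j ∈ range (k + 1), (B j : ℚ) * ((k - j + n).choose n : ℚ) +
        (-1) ^ n * ∑ j ∈ Ico (k + n + 1) N, (B j : ℚ) * ((j - k - 1).choose n : ℚ) := by
  have hext : ∑ j ∈ range N, (B j : ℚ) * Ring.choose ((k : ℚ) - j + n) n =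
      ∑ j ∈ range (N + k + 1), (B j : ℚ) * Ring.choose ((k : ℚ) - j + n) n :=
    sum_subset (range_subset_range.mpr (by omega)) fun j _ hj => by
      simp [hB j (not_lt.mp (mem_range.not.mp hj))]
  rw [eval_bettiHilbertPoly, hext, ← sum_range_add_sum_Ico _ (by omega : k + 1 ≤ N + k + 1)]
  congr 1
  · exact sum_congr rfl fun j hj => by
      rw [Ring.choose_natCast_sub_add (Nat.lt_succ_iff.mp (mem_range.mp hj))]
  calc ∑ j ∈ Ico (k + 1) (N + k + 1), (B j : ℚ) * Ring.choose ((k : ℚ) - j + n) n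
      = ∑ j ∈ Ico (k + 1) (N + k + 1), (-1) ^ n * ((B j : ℚ) * ((j - k - 1).choose n : ℚ)) :=
        sum_congr rfl fun j hj => by
          rw [Ring.choose_natCast_sub_add_of_lt (mem_Ico.mp hj).1]
          ring
    _ = ∑ j ∈ Ico (k + n + 1) N, (-1) ^ n * ((B j : ℚ) * ((j - k - 1).choose n : ℚ)) := by
        refine (sum_subset (Ico_subset_Ico (by omega) (by omega)) fun j hj hj' => ?_).symm
        have hkj := (mem_Ico.mp hj).1
        rcases lt_or_ge j (k + n + 1) with hjn | hjN
        · simp [Nat.choose_eq_zero_of_lt (by omega : j - k - 1 < n)]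
        · simp [hB j (by simp_all)]
    _ = _ := (mul_sum _ _ _).symm

end BettiPolynomial

theorem defect_from_betti_numbers_general
    (n s : ℕ) (I : Ideal (S n))
    (β : ℕ → ℕ → ℕ) (hres : IsDegreewiseFreeResolution n s β I)
    (N : ℕ) (hN : ∀ i j, N ≤ j → β i j = 0)
    (B : ℕ → ℤ) (hB : ∀ j, B j = ∑ i ∈ range (s + 1), (-1 : ℤ) ^ i * β i j)
    (p : Polynomial ℚ)
    (hp : ∃ k₀ : ℕ, ∀ k : ℕ, k₀ ≤ k → p.eval (k : ℚ) = (hilb I k : ℚ))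
    (δ : ℕ → ℚ) (hδ : ∀ k : ℕ, δ k = p.eval (k : ℚ) - (hilb I k : ℚ)) :
    ∀ k : ℕ,
      δ k = (-1 : ℚ) ^ n *
          ∑ j ∈ Finset.Ico (k + n + 1) N, (B j : ℚ) * (Nat.choose (j - k - 1) n : ℚ) ∧
      (δ k ≠ 0 → ∃ j : ℕ, k + n + 1 ≤ j ∧ B j ≠ 0) := by
  have hB₀ : ∀ j, N ≤ j → B j = 0 := fun j hj => by simp [hB j, hN _ j hj]
  have hhilb := hilb_eq_sum_mul_choose hres hB
  have hpoly : p = bettiHilbertPoly n N B := by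
    obtain ⟨k₀, hk₀⟩ := hp
    refine Polynomial.eq_of_eval_natCast_eq (max k₀ N) fun k hk => ?_
    rw [hk₀ k (le_of_max_le_left hk), hhilb, eval_bettiHilbertPoly_natCast hB₀,
      Ico_eq_empty (by omega), sum_empty, mul_zero, add_zero]
  intro k
  have hδk : δ k = (-1 : ℚ) ^ n *
      ∑ j ∈ Ico (k + n + 1) N, (B j : ℚ) * ((j - k - 1).choose n : ℚ) := by
    rw [hδ, hpoly, eval_bettiHilbertPoly_natCast hB₀, hhilb, add_sub_cancel_left]
  refine ⟨hδk, fun hne => ?_⟩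
  obtain ⟨j, hj, hBj⟩ := exists_ne_zero_of_sum_ne_zero (right_ne_zero_of_mul (hδk ▸ hne))
  exact ⟨j, (mem_Ico.mp hj).1, fun h => hBj (by simp [h])⟩

/-- If `p_I` is the Hilbert polynomial of `S/I` and
`δ_k(I) = p_I(k) − h_I(k)` is the defect, then
`δ_k(I) = (−1)^n Σ_{j ≥ k+n+1} B_j ⬝ binom(j−k−1, n)`; in particular, if `δ_k(I) ≠ 0`
then `B_j ≠ 0` for some `j ≥ k+n+1`.  (Here `N` is a common bound beyond which all the
graded Betti numbers `β_{i,j}` vanish, so the sum `Σ_{j ≥ k+n+1}` is the finite sum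
`Σ_{j=k+n+1}^{N-1}`.) -/
theorem defect_from_betti_numbers
    (n s : ℕ) (I : Ideal (S n)) (hI : IsHomogeneousIdeal I)
    (β : ℕ → ℕ → ℕ) (hres : IsDegreewiseFreeResolution n s β I)
    (N : ℕ) (hN : ∀ i j, N ≤ j → β i j = 0)
    (B : ℕ → ℤ) (hB : ∀ j, B j = ∑ i ∈ range (s + 1), (-1 : ℤ) ^ i * β i j)
    (p : Polynomial ℚ)
    (hp : ∃ k₀ : ℕ, ∀ k : ℕ, k₀ ≤ k → p.eval (k : ℚ) = (hilb I k : ℚ))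
    (δ : ℕ → ℚ) (hδ : ∀ k : ℕ, δ k = p.eval (k : ℚ) - (hilb I k : ℚ)) :
    ∀ k : ℕ,
      δ k = (-1 : ℚ) ^ n *
          ∑ j ∈ Finset.Ico (k + n + 1) N, (B j : ℚ) * (Nat.choose (j - k - 1) n : ℚ) ∧
      (δ k ≠ 0 → ∃ j : ℕ, k + n + 1 ≤ j ∧ B j ≠ 0) :=
  defect_from_betti_numbers_general n s I β hres N hN B hB p hp δ hδ
end

section
/- Let d ≥ 8 and 4 ≤ a ≤ d/2. Let (x_0, f_2, g) be a complete intersection ideal in C[x_0,...,x_3] with f_2 ∈ C[x_1,x_2,x_3]_a and g ∈ C[x_1,x_2,x_3]_{d−1}. Then any homogeneous f of degree d lying in (x_0, f_2, g)^2 can be written as f = x_0 f_1 + f_2^2 f_3 with f_1 ∈ C[x_0,...,x_3]_{d−1} and f_3 ∈ C[x_1,x_2,x_3]_{d−2a}; moreover this decomposition is unique up to rescaling f_3 by a nonzero constant c and f_2 by c^{-1/2}-type compensation (i.e., replacing (f_2^2, f_3) by (c^{-1} f_2^2, c f_3)). -/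
open MvPolynomial Module Finset

/-- A polynomial not involving the variable `x₀` (i.e. lying in `ℂ[x₁,…,x₃]`). -/
def NoX0 (f : S 3) : Prop := ∀ m ∈ f.support, m 0 = 0

/-! The square of `(x₀, f₂, g)` is generated by `x₀, f₂², f₂g, g²`, and `f₂g`, `g²` have degree
`> d`; so the degree-`d` part of a representation of `f` reads `f = x₀A + f₂²B`, and setting
`x₀ = 0` in `B` moves the `x₀`-multiples of `B` into the first summand. For uniqueness, setting
`x₀ = 0` in two decompositions gives `f₂²f₃ = f₂'²f₃'`, while `(x₀, f₂') = (x₀, f₂)` forces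
`f₂ ∣ f₂'` in `ℂ[x₁,x₂,x₃]`, hence `f₂' = u f₂` with `u ∈ ℂˣ` as both have degree `a`. -/

namespace MvPolynomial

variable {σ R : Type*}

section CommSemiring

variable [CommSemiring R] {p q : MvPolynomial σ R} {m n : ℕ}

theorem homogeneousComponent_mul_of_le (hq : q.IsHomogeneous m) (h : m ≤ n) :
    homogeneousComponent n (p * q) = homogeneousComponent (n - m) p * q := by
  induction p using MvPolynomial.induction_on' with
  | monomial u c =>
    have hu : (monomial u c : MvPolynomial σ R).IsHomogeneous u.degree :=
      isHomogeneous_monomial c rfl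
    rw [homogeneousComponent_of_mem (hu.mul hq), homogeneousComponent_of_mem hu]
    by_cases he : n = u.degree + m
    · rw [if_pos he, if_pos (by omega)]
    · rw [if_neg he, if_neg (by omega), zero_mul]
  | add p p' hp hp' => rw [add_mul, map_add, hp, hp', map_add, add_mul]

theorem homogeneousComponent_mul_of_lt (hq : q.IsHomogeneous m) (h : n < m) :
    homogeneousComponent n (p * q) = 0 := by
  induction p using MvPolynomial.induction_on' with
  | monomial u c =>
    rw [homogeneousComponent_of_mem ((isHomogeneous_monomial c rfl).mul hq), if_neg (by omega)]
  | add p p' hp hp' => rw [add_mul, map_add, hp, hp', add_zero]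

theorem exists_C_mul_eq_of_dvd (hp : p.IsHomogeneous n) (hq : q.IsHomogeneous n) (h : q ∣ p) :
    ∃ u : R, p = C u * q := by
  obtain ⟨w, rfl⟩ := h
  refine ⟨coeff 0 w, ?_⟩
  rw [← homogeneousComponent_eq_self hp, mul_comm, homogeneousComponent_mul_of_le hq le_rfl,
    Nat.sub_self, homogeneousComponent_zero]

end CommSemiring

section SetVarZero

variable [CommSemiring R] [DecidableEq σ] {p : MvPolynomial σ R} {n : ℕ} (i : σ)

noncomputable def setVarZero : MvPolynomial σ R →ₐ[R] MvPolynomial σ R :=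
  aeval (Function.update X i 0)

@[simp]
theorem setVarZero_X_self : setVarZero i (X i : MvPolynomial σ R) = 0 := by
  simp [setVarZero]

theorem setVarZero_eq_self (h : i ∉ p.vars) : setVarZero i p = p := by
  calc setVarZero i p = aeval X p :=
        eval₂Hom_congr' rfl
          (fun j hj _ => by rw [Function.update_of_ne (ne_of_mem_of_not_mem hj h)]) rfl
    _ = p := aeval_X_left_apply p

theorem notMem_vars_setVarZero (p : MvPolynomial σ R) : i ∉ (setVarZero i p).vars := by
  intro hi
  obtain ⟨j, -, hj⟩ := Finset.mem_biUnion.mp (vars_bind₁ _ p hi)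
  by_cases hji : j = i
  · subst hji; simp at hj
  · rw [Function.update_of_ne hji, vars_def] at hj
    exact hji (Multiset.mem_singleton.mp (Multiset.mem_of_le (degrees_X' j)
      (Multiset.mem_toFinset.mp hj))).symm

theorem dvd_of_mem_span_X_pair {q : MvPolynomial σ R} (hp : i ∉ p.vars) (hq : i ∉ q.vars)
    (h : p ∈ Ideal.span {X i, q}) : q ∣ p := by
  obtain ⟨r, s, hrs⟩ := Ideal.mem_span_pair.mp h
  have := congrArg (setVarZero i) hrs
  rw [map_add, map_mul, map_mul, setVarZero_X_self, mul_zero, zero_add, setVarZero_eq_self i hp,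
    setVarZero_eq_self i hq] at this
  exact Dvd.intro_left _ this

theorem IsHomogeneous.setVarZero (hp : p.IsHomogeneous n) : (setVarZero i p).IsHomogeneous n := by
  rw [← one_mul n]
  exact hp.aeval (Function.update X i 0) fun j => by
    by_cases hji : j = i
    · rw [hji, Function.update_self]; exact isHomogeneous_zero σ R 1
    · rw [Function.update_of_ne hji]; exact isHomogeneous_X R j

end SetVarZero

section CommRing

variable [CommRing R] [DecidableEq σ] (i : σ)

theorem X_dvd_sub_setVarZero (p : MvPolynomial σ R) : X i ∣ p - setVarZero i p := by
  have h : (Ideal.Quotient.mkₐ R (Ideal.span {X i})).comp (setVarZero i) =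
      Ideal.Quotient.mkₐ R (Ideal.span {X i}) := by
    ext j
    rcases eq_or_ne j i with rfl | hji
    · simp
    · simp [setVarZero, Function.update_of_ne hji]
  rw [← Ideal.mem_span_singleton, ← Ideal.Quotient.eq]
  exact (AlgHom.congr_fun h p).symm

end CommRing

end MvPolynomial

theorem RingTheory.Sequence.not_isRegular_zero_cons {R M : Type*} [CommRing R] [AddCommGroup M]
    [Module R M] (rs : List R) : ¬ IsRegular M (0 :: rs) := by
  intro h
  obtain ⟨h0, hrs⟩ := (isRegular_cons_iff M 0 rs).mp h
  have := h0.subsingleton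
  have := hrs.nontrivial
  exact false_of_nontrivial_of_subsingleton (QuotSMulTop (0 : R) M)

theorem Ideal.sq_span_triple_le {R : Type*} [CommSemiring R] (x y z : R) :
    span {x, y, z} ^ 2 ≤ span {x, y ^ 2, y * z, z ^ 2} := by
  set J := span {x, y ^ 2, y * z, z ^ 2}
  have hx : x ∈ J := subset_span (by simp)
  have hyy : y * y ∈ J := subset_span (by simp [sq])
  have hyz : y * z ∈ J := subset_span (by simp)
  have hzy : z * y ∈ J := mul_comm y z ▸ hyz
  have hzz : z * z ∈ J := subset_span (by simp [sq])
  rw [sq, span_mul_span', span_le]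
  rintro _ ⟨s, hs, t, ht, rfl⟩
  simp only [Set.mem_insert_iff, Set.mem_singleton_iff] at hs ht
  rcases hs with hs | hs | hs <;> rcases ht with ht | ht | ht <;> rw [hs, ht] <;>
    first | assumption | exact mul_mem_right _ _ hx | exact mul_mem_left _ _ hx

theorem Ideal.exists_of_mem_sq_span_triple {R : Type*} [CommSemiring R] {x y z f : R}
    (hf : f ∈ span {x, y, z} ^ 2) :
    ∃ r₁ r₂ r₃ r₄ : R, f = r₁ * x + r₂ * y ^ 2 + r₃ * (y * z) + r₄ * z ^ 2 := by
  obtain ⟨r₁, _, h₂, rfl⟩ := mem_span_insert.mp (sq_span_triple_le x y z hf)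
  obtain ⟨r₂, _, h₃, rfl⟩ := mem_span_insert.mp h₂
  obtain ⟨r₃, _, h₄, rfl⟩ := mem_span_insert.mp h₃
  obtain ⟨r₄, rfl⟩ := mem_span_singleton'.mp h₄
  exact ⟨r₁, r₂, r₃, r₄, by ring⟩

namespace MvPolynomial

variable {σ : Type*} [DecidableEq σ] (i : σ)

theorem exists_eq_X_mul_add_sq_mul_of_mem_sq_span {R : Type*} [CommRing R]
    {f f₂ g : MvPolynomial σ R} {d a e : ℕ} (hf : f.IsHomogeneous d) (hf₂ : f₂.IsHomogeneous a)
    (hg : g.IsHomogeneous e) (hd : 0 < d) (had : 2 * a ≤ d) (hae : d < a + e)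
    (hfI : f ∈ Ideal.span {X i, f₂, g} ^ 2) :
    ∃ f₁ f₃ : MvPolynomial σ R, f₁.IsHomogeneous (d - 1) ∧ f₃.IsHomogeneous (d - 2 * a) ∧
      i ∉ f₃.vars ∧ f = X i * f₁ + f₂ ^ 2 * f₃ := by
  have hX : (X i : MvPolynomial σ R).IsHomogeneous 1 := isHomogeneous_X R i
  have hf₂sq : (f₂ ^ 2).IsHomogeneous (2 * a) := mul_comm a 2 ▸ hf₂.pow 2
  obtain ⟨r₁, r₂, r₃, r₄, hr⟩ := Ideal.exists_of_mem_sq_span_triple hfI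
  set B := homogeneousComponent (d - 2 * a) r₂
  have hB : f = X i * homogeneousComponent (d - 1) r₁ + f₂ ^ 2 * B := by
    have := congrArg (homogeneousComponent d) hr
    rwa [homogeneousComponent_eq_self hf, map_add, map_add, map_add,
      homogeneousComponent_mul_of_le hX hd, homogeneousComponent_mul_of_le hf₂sq had,
      homogeneousComponent_mul_of_lt (hf₂.mul hg) hae,
      homogeneousComponent_mul_of_lt (hg.pow 2) (by omega), add_zero, add_zero,
      mul_comm _ (X i), mul_comm B] at this
  obtain ⟨B', hB'⟩ := X_dvd_sub_setVarZero i B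
  set f₃ := setVarZero i B
  have hf₃ : f₃.IsHomogeneous (d - 2 * a) := (homogeneousComponent_isHomogeneous _ _).setVarZero i
  have hQ : f = (homogeneousComponent (d - 1) r₁ + f₂ ^ 2 * B') * X i + f₂ ^ 2 * f₃ := by
    rw [hB]; linear_combination f₂ ^ 2 * hB'
  refine ⟨homogeneousComponent (d - 1) (homogeneousComponent (d - 1) r₁ + f₂ ^ 2 * B'), f₃,
    homogeneousComponent_isHomogeneous _ _, hf₃, notMem_vars_setVarZero i B, ?_⟩
  have hf₂f₃ : (f₂ ^ 2 * f₃).IsHomogeneous d := by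
    convert hf₂sq.mul hf₃ using 1; omega
  have := congrArg (homogeneousComponent d) hQ
  rwa [homogeneousComponent_eq_self hf, map_add, homogeneousComponent_mul_of_le hX hd,
    homogeneousComponent_eq_self hf₂f₃, mul_comm _ (X i)] at this

theorem exists_smul_of_X_mul_add_sq_mul_eq {K : Type*} [Field K] {a : ℕ}
    {f₂ f₂' f₁ f₁' f₃ f₃' : MvPolynomial σ K} (hf₂0 : f₂ ≠ 0)
    (hf₂ : f₂.IsHomogeneous a) (hf₂' : f₂'.IsHomogeneous a) (hf₂i : i ∉ f₂.vars)
    (hf₂'i : i ∉ f₂'.vars) (hspan : Ideal.span {X i, f₂'} = Ideal.span {X i, f₂})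
    (hf₃i : i ∉ f₃.vars) (hf₃'i : i ∉ f₃'.vars)
    (h : X i * f₁ + f₂ ^ 2 * f₃ = X i * f₁' + f₂' ^ 2 * f₃') :
    ∃ c : K, c ≠ 0 ∧ f₃' = c • f₃ ∧ f₂' ^ 2 = c⁻¹ • f₂ ^ 2 := by
  have hprod : f₂ ^ 2 * f₃ = f₂' ^ 2 * f₃' := by
    have := congrArg (setVarZero i) h
    simpa only [map_add, map_mul, map_pow, setVarZero_X_self, zero_mul, zero_add,
      setVarZero_eq_self i hf₂i, setVarZero_eq_self i hf₂'i, setVarZero_eq_self i hf₃i,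
      setVarZero_eq_self i hf₃'i] using this
  obtain ⟨u, hu⟩ := exists_C_mul_eq_of_dvd hf₂' hf₂
    (dvd_of_mem_span_X_pair i hf₂'i hf₂i (hspan ▸ Ideal.subset_span (by simp)))
  have hu0 : u ≠ 0 := by
    rintro rfl
    rw [C_0, zero_mul] at hu
    have := dvd_of_mem_span_X_pair i hf₂i hf₂'i (hspan.symm ▸ Ideal.subset_span (by simp))
    exact hf₂0 (zero_dvd_iff.mp (hu ▸ this))
  have hf₃ : f₃ = C (u ^ 2) * f₃' := by
    apply mul_left_cancel₀ (pow_ne_zero 2 hf₂0)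
    rw [hprod, hu, map_pow]
    ring
  refine ⟨(u ^ 2)⁻¹, inv_ne_zero (pow_ne_zero 2 hu0), ?_, ?_⟩
  · rw [hf₃, smul_eq_C_mul, ← mul_assoc, ← map_mul, inv_mul_cancel₀ (pow_ne_zero 2 hu0), map_one,
      one_mul]
  · rw [inv_inv, hu, smul_eq_C_mul, mul_pow, map_pow]

end MvPolynomial

theorem noX0_iff_notMem_vars {p : S 3} : NoX0 p ↔ 0 ∉ p.vars := by
  simp [NoX0, mem_vars_iff_mem_support]

theorem decomposition_x0f1_plus_f2sq_f3_general
    (d a : ℕ) (ha : 4 ≤ a) (ha' : 2 * a ≤ d)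
    (f₂ g : S 3) (hf₂ : f₂.IsHomogeneous a) (hf₂' : NoX0 f₂)
    (hg : g.IsHomogeneous (d - 1))
    (hreg : RingTheory.Sequence.IsRegular (S 3) [X 0, f₂, g])
    (f : S 3) (hf : f.IsHomogeneous d)
    (hfI : f ∈ (Ideal.span {X (0 : Fin 4), f₂, g}) ^ 2) :
    ∃ f₁ f₃ : S 3, f₁.IsHomogeneous (d - 1) ∧
      f₃.IsHomogeneous (d - 2 * a) ∧ NoX0 f₃ ∧
      f = X 0 * f₁ + f₂ ^ 2 * f₃ ∧
      -- uniqueness, up to the rescaling `(f₂'², f₃') = (c⁻¹ f₂², c f₃)`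
      (∀ f₂' f₁' f₃' : S 3,
        f₂'.IsHomogeneous a → NoX0 f₂' →
        Ideal.span {X (0 : Fin 4), f₂'} = Ideal.span {X (0 : Fin 4), f₂} →
        f₁'.IsHomogeneous (d - 1) →
        f₃'.IsHomogeneous (d - 2 * a) → NoX0 f₃' →
        f = X 0 * f₁' + f₂' ^ 2 * f₃' →
          ∃ c : ℂ, c ≠ 0 ∧ f₃' = c • f₃ ∧ f₂' ^ 2 = c⁻¹ • f₂ ^ 2) := by
  have hf₂0 : f₂ ≠ 0 := by
    rintro rfl
    exact RingTheory.Sequence.not_isRegular_zero_cons [g]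
      ((RingTheory.Sequence.isRegular_cons_iff _ _ _).mp hreg).2
  obtain ⟨f₁, f₃, hf₁, hf₃, hf₃0, rfl⟩ := exists_eq_X_mul_add_sq_mul_of_mem_sq_span 0 hf hf₂ hg
    (by omega) ha' (by omega) hfI
  refine ⟨f₁, f₃, hf₁, hf₃, noX0_iff_notMem_vars.mpr hf₃0, rfl, ?_⟩
  intro f₂' f₁' f₃' h₂ h₂0 hspan _ _ h₃0 heq
  exact exists_smul_of_X_mul_add_sq_mul_eq 0 hf₂0 hf₂ h₂ (noX0_iff_notMem_vars.mp hf₂')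
    (noX0_iff_notMem_vars.mp h₂0) hspan hf₃0 (noX0_iff_notMem_vars.mp h₃0) heq

/-- Let `d ≥ 8` and `4 ≤ a ≤ d/2`, and let `(x₀, f₂, g)` be a complete
intersection ideal with `f₂ ∈ ℂ[x₁,x₂,x₃]_a` and `g ∈ ℂ[x₁,x₂,x₃]_{d−1}`.  Then any
homogeneous `f` of degree `d` in `(x₀, f₂, g)²` can be written as `f = x₀f₁ + f₂²f₃`
with `f₁ ∈ ℂ[x₀,…,x₃]_{d−1}` and `f₃ ∈ ℂ[x₁,x₂,x₃]_{d−2a}`; moreover the decomposition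
is unique up to replacing `(f₂², f₃)` by `(c⁻¹f₂², cf₃)` for a nonzero constant `c`. -/
theorem decomposition_x0f1_plus_f2sq_f3
    (d a : ℕ) (hd : 8 ≤ d) (ha : 4 ≤ a) (ha' : 2 * a ≤ d)
    (f₂ g : S 3) (hf₂ : f₂.IsHomogeneous a) (hf₂' : NoX0 f₂)
    (hg : g.IsHomogeneous (d - 1)) (hg' : NoX0 g)
    (hreg : RingTheory.Sequence.IsRegular (S 3) [X 0, f₂, g])
    (f : S 3) (hf : f.IsHomogeneous d)
    (hfI : f ∈ (Ideal.span {X (0 : Fin 4), f₂, g}) ^ 2) :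
    ∃ f₁ f₃ : S 3, f₁.IsHomogeneous (d - 1) ∧
      f₃.IsHomogeneous (d - 2 * a) ∧ NoX0 f₃ ∧
      f = X 0 * f₁ + f₂ ^ 2 * f₃ ∧
      -- uniqueness, up to the rescaling `(f₂'², f₃') = (c⁻¹ f₂², c f₃)`
      (∀ f₂' f₁' f₃' : S 3,
        f₂'.IsHomogeneous a → NoX0 f₂' →
        Ideal.span {X (0 : Fin 4), f₂'} = Ideal.span {X (0 : Fin 4), f₂} →
        f₁'.IsHomogeneous (d - 1) →
        f₃'.IsHomogeneous (d - 2 * a) → NoX0 f₃' →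
        f = X 0 * f₁' + f₂' ^ 2 * f₃' →
          ∃ c : ℂ, c ≠ 0 ∧ f₃' = c • f₃ ∧ f₂' ^ 2 = c⁻¹ • f₂ ^ 2) :=
  decomposition_x0f1_plus_f2sq_f3_general d a ha ha' f₂ g hf₂ hf₂' hg hreg f hf hfI
end
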